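/- Let F : ℝ^n → ℝ be differentiable with gradient ∇F that is Lipschitz continuous with constant β > 0 (β-smooth). Let (Ω, 𝒜, P) be a probability space, fix w ∈ ℝ^n, η > 0, ε ∈ [0,1), σ ≥ 0, and let g, e : Ω → ℝ^n be square-integrable random vectors with E[g] = ∇F(w), E[‖g‖²] ≤ ‖∇F(w)‖² + σ², and ‖e(ω)‖² ≤ ε ‖∇F(w)‖² for almost every ω. Then E[ F(w − η(g + e)) ] − F(w) ≤ −η { (1 − √ε) − η β (1 + ε) } ‖∇F(w)‖² + η² β σ². -/

import Mathlib

set_option maxHeartbeats 1000000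

open MeasureTheory InnerProductSpace intervalIntegral
open scoped RealInnerProductSpace

lemma descent_lemma {E : Type*} [NormedAddCommGroup E] [InnerProductSpace ℝ E] [CompleteSpace E]
    (F : E → ℝ) (hF : Differentiable ℝ F) (β : ℝ) (hβ : 0 ≤ β)
    (hLip : ∀ x y, ‖gradient F x - gradient F y‖ ≤ β * ‖x - y‖) (x y : E) :
    F y ≤ F x + ⟪gradient F x, y - x⟫ + β / 2 * ‖y - x‖ ^ 2 := by
  set L : ℝ → E := fun t => x + t • (y - x) with hL
  have hgradcont : Continuous (fun z => gradient F z) := by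
    have : LipschitzWith β.toNNReal (fun z => gradient F z) := by
      apply LipschitzWith.of_dist_le_mul
      intro a b
      simpa [dist_eq_norm, Real.coe_toNNReal β hβ] using hLip a b
    exact this.continuous
  have hLcont : Continuous L := by fun_prop
  set ψ : ℝ → ℝ := fun t => ⟪gradient F (L t), y - x⟫ with hψ
  have hψcont : Continuous ψ := (hgradcont.comp hLcont).inner continuous_const
  have hderiv : ∀ t : ℝ, HasDerivAt (fun s => F (L s)) (ψ t) t := by
    intro t
    have h1 : HasDerivAt L (y - x) t := by
      exact (((hasDerivAt_id t).smul_const (y - x)).const_add x).congr_deriv (one_smul ℝ _)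
    have h2 := ((hF (L t)).hasGradientAt).hasFDerivAt.comp_hasDerivAt t h1
    simp [hψ] at h2 ⊢; exact h2
  have hFTC : F (L 1) - F (L 0) = ∫ t in (0:ℝ)..1, ψ t := by
    rw [intervalIntegral.integral_eq_sub_of_hasDerivAt (fun t _ => hderiv t)
      (hψcont.intervalIntegrable 0 1)]
  have hL0 : L 0 = x := by simp [hL]
  have hL1 : L 1 = y := by simp [hL]
  have hbound : ∀ t ∈ Set.Icc (0:ℝ) 1, ψ t ≤ ψ 0 + β * t * ‖y - x‖ ^ 2 := by
    intro t ht
    have h1 : ψ t - ψ 0 = ⟪gradient F (L t) - gradient F (L 0), y - x⟫ := by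
      simp [hψ, inner_sub_left]
    have h2 : ⟪gradient F (L t) - gradient F (L 0), y - x⟫ ≤
        ‖gradient F (L t) - gradient F (L 0)‖ * ‖y - x‖ := real_inner_le_norm _ _
    have h3 : ‖gradient F (L t) - gradient F (L 0)‖ ≤ β * (t * ‖y - x‖) := by
      have := hLip (L t) (L 0)
      have hnorm : ‖L t - L 0‖ = t * ‖y - x‖ := by
        simp [hL, norm_smul, abs_of_nonneg ht.1]
      rw [hnorm] at this; exact this
    nlinarith [norm_nonneg (y - x), ht.1, mul_le_mul_of_nonneg_right h3 (norm_nonneg (y - x))]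
  have hle : (∫ t in (0:ℝ)..1, ψ t) ≤ ∫ t in (0:ℝ)..1, (ψ 0 + β * t * ‖y - x‖ ^ 2) := by
    apply intervalIntegral.integral_mono_on (by norm_num) (hψcont.intervalIntegrable 0 1)
      (by apply Continuous.intervalIntegrable; fun_prop)
    exact hbound
  have heval : (∫ t in (0:ℝ)..1, (ψ 0 + β * t * ‖y - x‖ ^ 2)) =
      ψ 0 + β / 2 * ‖y - x‖ ^ 2 := by
    rw [intervalIntegral.integral_add (by apply Continuous.intervalIntegrable; fun_prop)
      (by apply Continuous.intervalIntegrable; fun_prop)]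
    simp only [intervalIntegral.integral_const, smul_eq_mul]
    have : ∀ t : ℝ, β * t * ‖y - x‖ ^ 2 = (β * ‖y - x‖ ^ 2) * t := by intro t; ring
    simp_rw [this]
    rw [intervalIntegral.integral_const_mul, integral_id]
    ring
  have hψ0 : ψ 0 = ⟪gradient F x, y - x⟫ := by rw [hψ]; simp [hL0]
  rw [hL0, hL1] at hFTC
  linarith [hle.trans_eq heval, hFTC.le, hFTC.ge]

/-- expected one-step descent bound.  If `F` is differentiable with
`β`-Lipschitz gradient, `g` is an unbiased stochastic gradient at `w` with
`E[‖g‖²] ≤ ‖∇F(w)‖² + σ²`, and the reconstruction error satisfies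
`‖e‖² ≤ ε ‖∇F(w)‖²` almost surely, then
`E[F(w - η(g + e))] - F(w) ≤ -η {(1-√ε) - ηβ(1+ε)} ‖∇F(w)‖² + η² β σ²`. -/
theorem expected_one_step_descent_bound
    (n : ℕ) (F : EuclideanSpace ℝ (Fin n) → ℝ)
    (hF : Differentiable ℝ F)
    (β : ℝ) (hβ : 0 < β)
    (hLip : ∀ x y, ‖gradient F x - gradient F y‖ ≤ β * ‖x - y‖)
    {Ω : Type*} [MeasurableSpace Ω] (μ : Measure Ω) [IsProbabilityMeasure μ]
    (w : EuclideanSpace ℝ (Fin n))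
    (η : ℝ) (hη : 0 < η)
    (ε : ℝ) (hε0 : 0 ≤ ε) (hε1 : ε < 1)
    (σ : ℝ) (hσ : 0 ≤ σ)
    (g e : Ω → EuclideanSpace ℝ (Fin n))
    (hgL2 : MemLp g 2 μ) (heL2 : MemLp e 2 μ)
    (hgmean : ∫ ω, g ω ∂μ = gradient F w)
    (hgnorm : ∫ ω, ‖g ω‖ ^ 2 ∂μ ≤ ‖gradient F w‖ ^ 2 + σ ^ 2)
    (he : ∀ᵐ ω ∂μ, ‖e ω‖ ^ 2 ≤ ε * ‖gradient F w‖ ^ 2) :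
    (∫ ω, F (w - η • (g ω + e ω)) ∂μ) - F w ≤
      -η * ((1 - Real.sqrt ε) - η * β * (1 + ε)) * ‖gradient F w‖ ^ 2 +
        η ^ 2 * β * σ ^ 2 := by
  set G := gradient F w with hG
  set X : Ω → EuclideanSpace ℝ (Fin n) := fun ω => w - η • (g ω + e ω) with hX
  -- integrability facts
  have hgeL2 : MemLp (fun ω => g ω + e ω) 2 μ := hgL2.add heL2
  have int_ge : Integrable (fun ω => g ω + e ω) μ := hgeL2.integrable one_le_two
  have sqint : ∀ (f : Ω → EuclideanSpace ℝ (Fin n)), MemLp f 2 μ →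
      Integrable (fun ω => ‖f ω‖ ^ 2) μ := by
    intro f hf
    have := hf.integrable_norm_rpow (by norm_num) (by norm_num)
    simpa [ENNReal.toReal_ofNat, Real.rpow_natCast] using this
  have int_gsq : Integrable (fun ω => ‖g ω‖ ^ 2) μ := sqint g hgL2
  have int_gesq : Integrable (fun ω => ‖g ω + e ω‖ ^ 2) μ := sqint _ hgeL2
  have int_inner : Integrable (fun ω => ⟪G, g ω⟫) μ :=
    (innerSL ℝ G).integrable_comp (hgL2.integrable one_le_two)
  -- descent lemma applied pointwise
  have hdes : ∀ ω, F (X ω) ≤ F w - η * ⟪G, g ω⟫ - η * ⟪G, e ω⟫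
      + β / 2 * η ^ 2 * ‖g ω + e ω‖ ^ 2 := by
    intro ω
    have h := descent_lemma F hF β hβ.le hLip w (X ω)
    have hXw : X ω - w = (-η) • (g ω + e ω) := by simp [hX]; abel
    rw [hXw] at h
    have h1 : ⟪G, (-η) • (g ω + e ω)⟫ = -η * ⟪G, g ω⟫ - η * ⟪G, e ω⟫ := by
      rw [real_inner_smul_right, inner_add_right]; ring
    have h2 : ‖(-η) • (g ω + e ω)‖ ^ 2 = η ^ 2 * ‖g ω + e ω‖ ^ 2 := by
      rw [norm_smul]; simp [abs_of_pos hη]; ring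
    rw [h1, h2] at h
    linarith
  -- the a.e. dominating comparison function
  set h : Ω → ℝ := fun ω => F w - η * ⟪G, g ω⟫ + η * Real.sqrt ε * ‖G‖ ^ 2
      + β * η ^ 2 * ‖g ω‖ ^ 2 + β * η ^ 2 * ε * ‖G‖ ^ 2 with hh
  have int_h : Integrable h μ := by
    apply Integrable.add
    apply Integrable.add
    apply Integrable.add
    · exact (integrable_const _).sub (int_inner.const_mul η)
    · exact integrable_const _
    · exact int_gsq.const_mul _
    · exact integrable_const _
  have hae : ∀ᵐ ω ∂μ, F (X ω) ≤ h ω := by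
    filter_upwards [he] with ω heω
    have h1 := hdes ω
    have hGnn : (0:ℝ) ≤ ‖G‖ := norm_nonneg _
    have henorm : ‖e ω‖ ≤ Real.sqrt ε * ‖G‖ := by
      have := Real.sqrt_le_sqrt heω
      rwa [Real.sqrt_sq (norm_nonneg _), Real.sqrt_mul hε0, Real.sqrt_sq hGnn] at this
    have hinner : -⟪G, e ω⟫ ≤ Real.sqrt ε * ‖G‖ ^ 2 := by
      have h2 : -⟪G, e ω⟫ ≤ ‖G‖ * ‖e ω‖ := by
        have := abs_real_inner_le_norm G (e ω)
        cases' abs_le.mp this with hl hr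
        linarith
      nlinarith
    have hsum : ‖g ω + e ω‖ ^ 2 ≤ 2 * ‖g ω‖ ^ 2 + 2 * ‖e ω‖ ^ 2 := by
      have h0 := norm_add_le (g ω) (e ω)
      have h0' : ‖g ω + e ω‖ ^ 2 ≤ (‖g ω‖ + ‖e ω‖) ^ 2 :=
        pow_le_pow_left₀ (norm_nonneg _) h0 2
      nlinarith [sq_nonneg (‖g ω‖ - ‖e ω‖)]
    have hesq : ‖e ω‖ ^ 2 ≤ ε * ‖G‖ ^ 2 := heω
    show F (X ω) ≤ F w - η * ⟪G, g ω⟫ + η * Real.sqrt ε * ‖G‖ ^ 2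
      + β * η ^ 2 * ‖g ω‖ ^ 2 + β * η ^ 2 * ε * ‖G‖ ^ 2
    have hβη : (0:ℝ) ≤ β / 2 * η ^ 2 := by positivity
    nlinarith [mul_le_mul_of_nonneg_left hsum hβη, mul_le_mul_of_nonneg_left hesq
      (by positivity : (0:ℝ) ≤ β * η ^ 2), mul_le_mul_of_nonneg_left hinner hη.le]
  -- integrability of F ∘ X
  have hrev : ∀ ω, F w + ⟪G, X ω - w⟫ - 3 * β / 2 * ‖X ω - w‖ ^ 2 ≤ F (X ω) := by
    intro ω
    have h := descent_lemma F hF β hβ.le hLip (X ω) w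
    have h2 : ⟪gradient F (X ω), w - X ω⟫ ≤ ⟪G, w - X ω⟫ + β * ‖X ω - w‖ ^ 2 := by
      have h3 : ⟪gradient F (X ω) - G, w - X ω⟫ ≤
          ‖gradient F (X ω) - G‖ * ‖w - X ω‖ := real_inner_le_norm _ _
      have h4 : ‖gradient F (X ω) - G‖ ≤ β * ‖X ω - w‖ := hLip (X ω) w
      rw [inner_sub_left, norm_sub_rev w (X ω)] at h3
      have h5 := mul_le_mul_of_nonneg_right h4 (norm_nonneg (X ω - w))
      rw [show β * ‖X ω - w‖ * ‖X ω - w‖ = β * ‖X ω - w‖ ^ 2 from by ring] at h5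
      linarith
    have h6 : ⟪G, w - X ω⟫ = -⟪G, X ω - w⟫ := by
      rw [show w - X ω = -(X ω - w) from by abel, inner_neg_right]
    have h7 : ‖w - X ω‖ = ‖X ω - w‖ := norm_sub_rev _ _
    rw [h7] at h
    rw [h6] at h2
    linarith
  have hXsub : ∀ ω, ‖X ω - w‖ = η * ‖g ω + e ω‖ := by
    intro ω
    have : X ω - w = (-η) • (g ω + e ω) := by simp [hX]; abel
    rw [this, norm_smul]; simp [abs_of_pos hη]
  have int_FX : Integrable (fun ω => F (X ω)) μ := by
    apply Integrable.mono' (g := fun ω => |F w| + ‖G‖ * (η * ‖g ω + e ω‖)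
        + 3 * β / 2 * (η ^ 2 * ‖g ω + e ω‖ ^ 2))
    · apply Integrable.add
      apply Integrable.add
      · exact integrable_const _
      · exact (int_ge.norm.const_mul η).const_mul ‖G‖
      · exact (int_gesq.const_mul _).const_mul _
    · exact hF.continuous.comp_aestronglyMeasurable
        (aestronglyMeasurable_const.sub ((hgL2.1.add heL2.1).const_smul η))
    · filter_upwards with ω
      have hub : F (X ω) ≤ F w + ⟪G, X ω - w⟫ + β / 2 * ‖X ω - w‖ ^ 2 :=
        descent_lemma F hF β hβ.le hLip w (X ω)
      have hlb := hrev ω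
      have hXn := hXsub ω
      have hib : |⟪G, X ω - w⟫| ≤ ‖G‖ * (η * ‖g ω + e ω‖) := by
        have := abs_real_inner_le_norm G (X ω - w)
        rw [hXn] at this
        linarith [this, mul_le_mul_of_nonneg_left (le_refl (η * ‖g ω + e ω‖))
          (norm_nonneg G)]
      have hsq : ‖X ω - w‖ ^ 2 = η ^ 2 * ‖g ω + e ω‖ ^ 2 := by rw [hXn]; ring
      have hpos : (0:ℝ) ≤ β * (η ^ 2 * ‖g ω + e ω‖ ^ 2) := by positivity
      rw [hsq] at hub hlb
      rw [Real.norm_eq_abs, abs_le]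
      cases' abs_le.mp hib with hl hr
      constructor
      · linarith [neg_abs_le (F w)]
      · linarith [le_abs_self (F w)]
  -- integrate
  have key : (∫ ω, F (X ω) ∂μ) ≤ ∫ ω, h ω ∂μ := integral_mono_ae int_FX int_h hae
  have hinnerint : (∫ ω, ⟪G, g ω⟫ ∂μ) = ‖G‖ ^ 2 := by
    have h0 := (innerSL ℝ G).integral_comp_comm (hgL2.integrable one_le_two)
    simp only [innerSL_apply_apply] at h0
    rw [h0, hgmean]
    exact real_inner_self_eq_norm_sq G
  have hint : (∫ ω, h ω ∂μ) = F w - η * ‖G‖ ^ 2 + η * Real.sqrt ε * ‖G‖ ^ 2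
      + β * η ^ 2 * (∫ ω, ‖g ω‖ ^ 2 ∂μ) + β * η ^ 2 * ε * ‖G‖ ^ 2 := by
    rw [hh]
    simp only []
    rw [MeasureTheory.integral_add, MeasureTheory.integral_add, MeasureTheory.integral_add,
      MeasureTheory.integral_sub, MeasureTheory.integral_const_mul,
      MeasureTheory.integral_const_mul, MeasureTheory.integral_const_mul, hinnerint]
    · simp [measure_univ]
    all_goals first
      | exact integrable_const _
      | exact int_inner.const_mul η
      | exact int_gsq.const_mul _
      | exact (integrable_const _).sub (int_inner.const_mul η)
      | exact ((integrable_const _).sub (int_inner.const_mul η)).add (integrable_const _)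
      | exact (((integrable_const _).sub (int_inner.const_mul η)).add
          (integrable_const _)).add (int_gsq.const_mul _)
  have hfin : β * η ^ 2 * (∫ ω, ‖g ω‖ ^ 2 ∂μ) ≤ β * η ^ 2 * (‖G‖ ^ 2 + σ ^ 2) :=
    mul_le_mul_of_nonneg_left hgnorm (by positivity)
  rw [hint] at key
  have : (∫ ω, F (X ω) ∂μ) - F w ≤ -η * ((1 - Real.sqrt ε) - η * β * (1 + ε)) * ‖G‖ ^ 2
      + η ^ 2 * β * σ ^ 2 := by nlinarith [key, hfin]
  exact this
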